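/- If v ∈ C^{2+α}_s(𝒪 ∪ Γ₀) for a domain 𝒪 ⊂ ℍ with degenerate boundary portion Γ₀ ⊂ {y=0}, then the function y·D²v, which extends continuously up to Γ₀ by definition of the space, vanishes on Γ₀: (y D²v)(x,0) = 0 for every (x,0) ∈ Γ₀. -/

import Mathlib

noncomputable section
open MeasureTheory Set

/-- The open upper half-plane ℍ = ℝ × (0,∞). -/
def UH : Set (ℝ × ℝ) := {p | 0 < p.2}

/-- Euclidean distance on ℝ². -/
def eDist (p q : ℝ × ℝ) : ℝ := Real.sqrt ((p.1 - q.1) ^ 2 + (p.2 - q.2) ^ 2)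

/-- Open Euclidean ball. -/
def eBall (P : ℝ × ℝ) (r : ℝ) : Set (ℝ × ℝ) := {p | eDist p P < r}

/-- Closed Euclidean ball. -/
def eClosedBall (P : ℝ × ℝ) (r : ℝ) : Set (ℝ × ℝ) := {p | eDist p P ≤ r}

/-- Open half-ball B⁺_r(P) = B_r(P) ∩ ℍ. -/
def halfBall (P : ℝ × ℝ) (r : ℝ) : Set (ℝ × ℝ) := eBall P r ∩ UH

/-- Cycloidal (Daskalopoulos–Hamilton/Koch) distance function. -/
def cyclDist (p q : ℝ × ℝ) : ℝ :=
  (|p.1 - q.1| + |p.2 - q.2|) /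
    (Real.sqrt p.2 + Real.sqrt q.2 + Real.sqrt (|p.1 - q.1| + |p.2 - q.2|))

/-- Partial derivative in x. -/
def dX (f : ℝ × ℝ → ℝ) (p : ℝ × ℝ) : ℝ := fderiv ℝ f p (1, 0)

/-- Partial derivative in y. -/
def dY (f : ℝ × ℝ → ℝ) (p : ℝ × ℝ) : ℝ := fderiv ℝ f p (0, 1)

/-- The (sign-reversed, generator form) Heston operator
`Lu = (y/2)(u_xx + 2ϱσ u_xy + σ² u_yy) + (r - q - y/2) u_x + κ(θ - y) u_y - r u`. -/
def heston (σ ϱ r q κ θ : ℝ) (u : ℝ × ℝ → ℝ) (p : ℝ × ℝ) : ℝ :=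
  p.2 / 2 * (dX (dX u) p + 2 * ϱ * σ * dY (dX u) p + σ ^ 2 * dY (dY u) p)
    + (r - q - p.2 / 2) * dX u p + κ * (θ - p.2) * dY u p - r * u p

/-- The rescaled Heston operator `L_{y₀}`. -/
def hestonY0 (σ ϱ r q κ θ y₀ : ℝ) (v : ℝ × ℝ → ℝ) (p : ℝ × ℝ) : ℝ :=
  (1 + p.2) / 2 * (dX (dX v) p + 2 * ϱ * σ * dY (dX v) p + σ ^ 2 * dY (dY v) p)
    + (r - q - y₀ * (1 + p.2) / 2) * dX v p + κ * (θ - y₀ * (1 + p.2)) * dY v p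
    - r * y₀ * v p

/-- Sup of |f| on a set. -/
def supAbs (S : Set (ℝ × ℝ)) (f : ℝ × ℝ → ℝ) : ℝ := sSup ((fun p => |f p|) '' S)

/-- Euclidean norm of the gradient. -/
def gradNorm (f : ℝ × ℝ → ℝ) (p : ℝ × ℝ) : ℝ := Real.sqrt ((dX f p) ^ 2 + (dY f p) ^ 2)

/-- Frobenius norm of the Hessian. -/
def hess2Norm (f : ℝ × ℝ → ℝ) (p : ℝ × ℝ) : ℝ :=
  Real.sqrt ((dX (dX f) p) ^ 2 + (dX (dY f) p) ^ 2 + (dY (dX f) p) ^ 2 + (dY (dY f) p) ^ 2)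

/-- The `C^{1,1}` norm on a set: sup|f| + sup|Df| + Lip(Df). -/
def C11Norm (S : Set (ℝ × ℝ)) (f : ℝ × ℝ → ℝ) : ℝ :=
  supAbs S f + sSup ((fun p => gradNorm f p) '' S)
    + sSup ((fun pq : (ℝ × ℝ) × (ℝ × ℝ) =>
        Real.sqrt ((dX f pq.1 - dX f pq.2) ^ 2 + (dY f pq.1 - dY f pq.2) ^ 2)
          / eDist pq.1 pq.2) '' {pq ∈ S ×ˢ S | pq.1 ≠ pq.2})

/-- The weighted `C^{1,1}_s` norm: ‖y D²f‖_∞ + ‖Df‖_∞ + ‖f‖_∞. -/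
def C11sNorm (S : Set (ℝ × ℝ)) (f : ℝ × ℝ → ℝ) : ℝ :=
  sSup ((fun p => |p.2| * hess2Norm f p) '' S)
    + sSup ((fun p => gradNorm f p) '' S) + supAbs S f

/-- Membership in the weighted Hölder space `C^α_s(S̄)` (bounded + s-Hölder). -/
def MemCalphaS (α : ℝ) (S : Set (ℝ × ℝ)) (f : ℝ × ℝ → ℝ) : Prop :=
  ContinuousOn f S ∧ ∃ C : ℝ, (∀ p ∈ S, |f p| ≤ C) ∧
    ∀ p ∈ S, ∀ q ∈ S, |f p - f q| ≤ C * (cyclDist p q) ^ α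

/-- Membership in the Daskalopoulos–Hamilton space `C^{2+α}_s(S̄)`. -/
def MemC2alphaS (α : ℝ) (S : Set (ℝ × ℝ)) (f : ℝ × ℝ → ℝ) : Prop :=
  ContDiffOn ℝ 2 f (interior S) ∧ MemCalphaS α S f ∧
    MemCalphaS α S (dX f) ∧ MemCalphaS α S (dY f) ∧
    MemCalphaS α S (fun p => p.2 * dX (dX f) p) ∧
    MemCalphaS α S (fun p => p.2 * dY (dX f) p) ∧
    MemCalphaS α S (fun p => p.2 * dY (dY f) p)

/-- The `C^α_s` norm (sup norm + s-Hölder seminorm). -/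
def CalphaSNorm (α : ℝ) (S : Set (ℝ × ℝ)) (f : ℝ × ℝ → ℝ) : ℝ :=
  supAbs S f + sSup ((fun pq : (ℝ × ℝ) × (ℝ × ℝ) =>
    |f pq.1 - f pq.2| / (cyclDist pq.1 pq.2) ^ α) '' {pq ∈ S ×ˢ S | pq.1 ≠ pq.2})

/-- The `C^{2+α}_s` norm. -/
def C2alphaSNorm (α : ℝ) (S : Set (ℝ × ℝ)) (f : ℝ × ℝ → ℝ) : ℝ :=
  CalphaSNorm α S f + CalphaSNorm α S (dX f) + CalphaSNorm α S (dY f)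
    + CalphaSNorm α S (fun p => p.2 * dX (dX f) p)
    + CalphaSNorm α S (fun p => p.2 * dY (dX f) p)
    + CalphaSNorm α S (fun p => p.2 * dY (dY f) p)

/-- The weight 𝔴(x,y) = y^{β-1} e^{-γ|x| - μ y}, β = 2κθ/σ², μ = 2κ/σ². -/
def hestonWeight (κ θ σ γ : ℝ) (p : ℝ × ℝ) : ℝ :=
  p.2 ^ (2 * κ * θ / σ ^ 2 - 1) * Real.exp (-(γ * |p.1|) - 2 * κ / σ ^ 2 * p.2)

/-- Membership in the weighted Sobolev space H²(V,𝔴). -/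
def MemH2w (κ θ σ γ : ℝ) (V : Set (ℝ × ℝ)) (u : ℝ × ℝ → ℝ) : Prop :=
  IntegrableOn (fun p =>
    (p.2 ^ 2 * (hess2Norm u p) ^ 2 + (1 + p.2) ^ 2 * (gradNorm u p) ^ 2
      + (1 + p.2) * (u p) ^ 2) * hestonWeight κ θ σ γ p) V volume

/-- The a.e. obstacle-problem condition `min{Lu, u - ψ} = 0` a.e. on V, in the
paper's sign convention: Lu ≤ 0, u ≥ ψ, with at least one equality, a.e. -/
def ObstacleAE (Lu u ψ : ℝ × ℝ → ℝ) (V : Set (ℝ × ℝ)) : Prop :=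
  ∀ᵐ p ∂(volume.restrict V), Lu p ≤ 0 ∧ ψ p ≤ u p ∧ (Lu p = 0 ∨ u p = ψ p)

/-- Membership in `C^{1,1}_s(S)`: C¹ on S, C² in the interior, with y·D²f bounded. -/
def MemC11s (S : Set (ℝ × ℝ)) (f : ℝ × ℝ → ℝ) : Prop :=
  ContDiffOn ℝ 1 f S ∧ ContDiffOn ℝ 2 f (interior S) ∧
    ∃ K : ℝ, ∀ p ∈ interior S, |p.2| * hess2Norm f p ≤ K


/-! At a boundary point `p = (x, 0)`, apply the mean value theorem to `∂ᵢv` along the segment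
from `(x, y)` to `(x, y) + y eⱼ`: it produces `ξ` with `y ∂ⱼ∂ᵢv(ξ)` equal to an increment of `∂ᵢv`
over a step of size `y`. Since `s(z, z') ≤ √(|x - x'| + |y - y'|)`, the `C^α_s` modulus of `∂ᵢv`
makes that increment `O(y^{α/2})`, and `ξ₂ ≤ 2y` gives `|ξ₂ ∂ⱼ∂ᵢv(ξ)| = O(y^{α/2})`. The `C^α_s`
modulus of `y ∂ⱼ∂ᵢv` then carries this bound to `p`, at cost `O(y^{α/2})` again; let `y → 0`. -/

open Filter Topology

lemma cyclDist_nonneg (p q : ℝ × ℝ) : 0 ≤ cyclDist p q := by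
  unfold cyclDist
  positivity

lemma cyclDist_le_sqrt (p q : ℝ × ℝ) :
    cyclDist p q ≤ Real.sqrt (|p.1 - q.1| + |p.2 - q.2|) := by
  unfold cyclDist
  set d := |p.1 - q.1| + |p.2 - q.2|
  refine div_le_of_le_mul₀ (by positivity) (Real.sqrt_nonneg d) ?_
  calc d = Real.sqrt d * Real.sqrt d := (Real.mul_self_sqrt (by positivity)).symm
    _ ≤ Real.sqrt d * (Real.sqrt p.2 + Real.sqrt q.2 + Real.sqrt d) := by
      gcongr
      linarith [Real.sqrt_nonneg p.2, Real.sqrt_nonneg q.2]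

lemma abs_sub_le_of_cyclDist_holder {f : ℝ × ℝ → ℝ} {C α b : ℝ} {p q : ℝ × ℝ} (hα : 0 ≤ α)
    (hf : |f p - f q| ≤ C * cyclDist p q ^ α) (hb : |p.1 - q.1| + |p.2 - q.2| ≤ b) :
    |f p - f q| ≤ max C 0 * b ^ (α / 2) := by
  have hb0 : 0 ≤ b := le_trans (by positivity) hb
  have hs : cyclDist p q ^ α ≤ b ^ (α / 2) := by
    calc cyclDist p q ^ α ≤ Real.sqrt b ^ α := by
          gcongr
          · exact cyclDist_nonneg p q
          · exact (cyclDist_le_sqrt p q).trans (Real.sqrt_le_sqrt hb)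
      _ = b ^ (α / 2) := by
          rw [Real.sqrt_eq_rpow, ← Real.rpow_mul hb0]
          ring_nf
  calc |f p - f q| ≤ C * cyclDist p q ^ α := hf
    _ ≤ max C 0 * cyclDist p q ^ α := by
      gcongr
      · exact Real.rpow_nonneg (cyclDist_nonneg p q) α
      · exact le_max_left C 0
    _ ≤ max C 0 * b ^ (α / 2) := by gcongr

lemma ContDiffOn.differentiableAt_fderiv_apply {E F : Type*} [NormedAddCommGroup E]
    [NormedSpace ℝ E] [NormedAddCommGroup F] [NormedSpace ℝ F] {f : E → F} {U : Set E}
    (hf : ContDiffOn ℝ 2 f U) (hU : IsOpen U) (w : E) :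
    ∀ q ∈ U, DifferentiableAt ℝ (fun p => fderiv ℝ f p w) q := fun _ hq =>
  (((hf.contDiffAt (hU.mem_nhds hq)).fderiv_right (m := 1) (by norm_num)).clm_apply
    contDiffAt_const).differentiableAt one_ne_zero

lemma bounds_of_mem_segment_add_smul {x y : ℝ} {w z : ℝ × ℝ} (hy : 0 ≤ y) (hw₂ : 0 ≤ w.2)
    (hw : |w.1| + w.2 ≤ 1) (hz : z ∈ segment ℝ ((x, y) : ℝ × ℝ) ((x, y) + y • w)) :
    y ≤ z.2 ∧ |z.1 - x| + z.2 ≤ 2 * y := by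
  rw [segment_eq_image'] at hz
  obtain ⟨θ, ⟨hθ₀, hθ₁⟩, rfl⟩ := hz
  simp only [add_sub_cancel_left, Prod.fst_add, Prod.snd_add, Prod.smul_fst, Prod.smul_snd,
    smul_eq_mul, abs_mul, abs_of_nonneg hθ₀, abs_of_nonneg hy]
  constructor
  · nlinarith [mul_nonneg hθ₀ hy]
  · nlinarith [mul_nonneg hθ₀ hy, abs_nonneg w.1]

section DegenerateBoundary

variable {𝒪 : Set (ℝ × ℝ)} {p w : ℝ × ℝ} {r α : ℝ} {u g : ℝ × ℝ → ℝ}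

lemma exists_near_abs_snd_mul_fderiv_le {Cg : ℝ} (hα : 0 ≤ α) (hp : p.2 = 0)
    (h𝒪 : ∀ q, dist q p < r → 0 < q.2 → q ∈ 𝒪) (hu : ∀ q ∈ 𝒪, DifferentiableAt ℝ u q)
    (hgu : ∀ q ∈ 𝒪, g q = u q) (hg : ∀ q ∈ 𝒪, ∀ q' ∈ 𝒪, |g q - g q'| ≤ Cg * cyclDist q q' ^ α)
    (hw₂ : 0 ≤ w.2) (hw : |w.1| + w.2 ≤ 1) {y : ℝ} (hy : 0 < y) (hyr : 2 * y < r) :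
    ∃ z ∈ 𝒪, |z.1 - p.1| + |z.2 - p.2| ≤ 2 * y ∧
      |z.2 * fderiv ℝ u z w| ≤ 2 * (max Cg 0 * (2 * y) ^ (α / 2)) := by
  set a : ℝ × ℝ := (p.1, y)
  have hbounds := fun z => bounds_of_mem_segment_add_smul (x := p.1) (z := z) hy.le hw₂ hw
  have hseg : segment ℝ a (a + y • w) ⊆ 𝒪 := by
    intro z hz
    obtain ⟨hz₂, hz₁⟩ := hbounds z hz
    refine h𝒪 z ?_ (hy.trans_le hz₂)
    rw [Prod.dist_eq, Real.dist_eq, Real.dist_eq, hp, sub_zero, abs_of_pos (hy.trans_le hz₂)]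
    exact max_lt (by linarith) (by linarith [abs_nonneg (z.1 - p.1)])
  obtain ⟨z, hz, hmvt⟩ := domain_mvt
    (fun z hz => (hu z (hseg hz)).hasFDerivAt.hasFDerivWithinAt) (convex_segment _ _)
    (left_mem_segment ℝ a (a + y • w)) (right_mem_segment ℝ a (a + y • w))
  rw [add_sub_cancel_left, map_smul, smul_eq_mul] at hmvt
  have hincr : |g (a + y • w) - g a| ≤ max Cg 0 * (2 * y) ^ (α / 2) := by
    refine abs_sub_le_of_cyclDist_holder hα
      (hg _ (hseg (right_mem_segment ℝ _ _)) _ (hseg (left_mem_segment ℝ _ _))) ?_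
    simp only [a, Prod.fst_add, Prod.snd_add, Prod.smul_fst, Prod.smul_snd, smul_eq_mul,
      add_sub_cancel_left, abs_mul, abs_of_pos hy, abs_of_nonneg hw₂]
    nlinarith
  obtain ⟨hz₂, hz₁⟩ := hbounds z hz
  refine ⟨z, hseg hz, by rwa [hp, sub_zero, abs_of_pos (hy.trans_le hz₂)], ?_⟩
  rw [hgu _ (hseg (right_mem_segment ℝ _ _)), hgu _ (hseg (left_mem_segment ℝ _ _)), hmvt,
    abs_mul, abs_of_pos hy] at hincr
  have hz₂' : z.2 ≤ 2 * y := by linarith [abs_nonneg (z.1 - p.1)]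
  calc |z.2 * fderiv ℝ u z w| = z.2 * |fderiv ℝ u z w| := by
        rw [abs_mul, abs_of_pos (hy.trans_le hz₂)]
    _ ≤ 2 * (y * |fderiv ℝ u z w|) := by nlinarith [abs_nonneg (fderiv ℝ u z w)]
    _ ≤ 2 * (max Cg 0 * (2 * y) ^ (α / 2)) := by gcongr

lemma eq_zero_of_eq_snd_mul_fderiv_of_cyclHolder {S : Set (ℝ × ℝ)} {h : ℝ × ℝ → ℝ} {Cg Ch : ℝ}
    (hα : 0 < α) (hpS : p ∈ S) (hp : p.2 = 0) (hr : 0 < r) (h𝒪S : 𝒪 ⊆ S)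
    (h𝒪 : ∀ q, dist q p < r → 0 < q.2 → q ∈ 𝒪) (hu : ∀ q ∈ 𝒪, DifferentiableAt ℝ u q)
    (hgu : ∀ q ∈ 𝒪, g q = u q) (hhu : ∀ q ∈ 𝒪, h q = q.2 * fderiv ℝ u q w)
    (hg : ∀ q ∈ 𝒪, ∀ q' ∈ 𝒪, |g q - g q'| ≤ Cg * cyclDist q q' ^ α)
    (hh : ∀ q ∈ S, ∀ q' ∈ S, |h q - h q'| ≤ Ch * cyclDist q q' ^ α)
    (hw₂ : 0 ≤ w.2) (hw : |w.1| + w.2 ≤ 1) : h p = 0 := by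
  set M := max Ch 0 + 2 * max Cg 0
  have hlim : Tendsto (fun y : ℝ => M * (2 * y) ^ (α / 2)) (𝓝[>] 0) (𝓝 0) := by
    refine tendsto_nhdsWithin_of_tendsto_nhds ?_
    have hcont : Continuous fun y : ℝ => M * (2 * y) ^ (α / 2) := by
      fun_prop (disch := positivity)
    simpa [Real.zero_rpow (by positivity : α / 2 ≠ 0)] using hcont.tendsto 0
  have hbound : ∀ᶠ y in 𝓝[>] 0, |h p| ≤ M * (2 * y) ^ (α / 2) := by
    filter_upwards [Ioo_mem_nhdsGT (half_pos hr)] with y ⟨hy, hyr⟩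
    obtain ⟨z, hz, hzp, hhz⟩ := exists_near_abs_snd_mul_fderiv_le hα.le hp h𝒪 hu hgu hg hw₂ hw
      hy (by linarith)
    have hpz : |h p - h z| ≤ max Ch 0 * (2 * y) ^ (α / 2) :=
      abs_sub_le_of_cyclDist_holder hα.le (hh p hpS z (h𝒪S hz))
        (by rwa [abs_sub_comm p.1, abs_sub_comm p.2])
    rw [← hhu z hz] at hhz
    linarith [abs_sub_abs_le_abs_sub (h p) (h z)]
  exact abs_nonpos_iff.mp (ge_of_tendsto hlim hbound)

end DegenerateBoundary

lemma exists_dist_lt_subset_of_eBall_inter_UH_subset {𝒪 : Set (ℝ × ℝ)} {p : ℝ × ℝ} {ε : ℝ}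
    (hε : 0 < ε) (h : eBall p ε ∩ UH ⊆ 𝒪) :
    ∃ r > 0, ∀ q, dist q p < r → 0 < q.2 → q ∈ 𝒪 := by
  have hnhds : eBall p ε ∈ 𝓝 p := by
    refine IsOpen.mem_nhds (isOpen_lt (by unfold eDist; fun_prop) continuous_const) ?_
    simpa [eBall, eDist] using hε
  obtain ⟨r, hr, hball⟩ := Metric.mem_nhds_iff.mp hnhds
  exact ⟨r, hr, fun q hq hq₂ => h ⟨hball hq, hq₂⟩⟩

theorem yD2v_vanishes_on_degenerate_boundary_general (𝒪 Γ₀ : Set (ℝ × ℝ)) (α : ℝ)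
    (hα : 0 < α)
    (h𝒪open : IsOpen 𝒪) (hΓ : Γ₀ ⊆ {p : ℝ × ℝ | p.2 = 0})
    (hΓint : ∀ p ∈ Γ₀, ∃ ε : ℝ, 0 < ε ∧ eBall p ε ∩ UH ⊆ 𝒪)
    (v g1 g2 h11 h12 h22 : ℝ × ℝ → ℝ)
    (hv : ContDiffOn ℝ 2 v 𝒪)
    (hg1 : ∀ p ∈ 𝒪, g1 p = dX v p) (hg2 : ∀ p ∈ 𝒪, g2 p = dY v p)
    (hh11 : ∀ p ∈ 𝒪, h11 p = p.2 * dX (dX v) p)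
    (hh12 : ∀ p ∈ 𝒪, h12 p = p.2 * dY (dX v) p)
    (hh22 : ∀ p ∈ 𝒪, h22 p = p.2 * dY (dY v) p)
    (hc : ∀ f ∈ ({g1, g2, h11, h12, h22} : Set (ℝ × ℝ → ℝ)),
      ContinuousOn f (𝒪 ∪ Γ₀) ∧
        ∃ C : ℝ, ∀ p ∈ 𝒪 ∪ Γ₀, ∀ q ∈ 𝒪 ∪ Γ₀,
          |f p - f q| ≤ C * (cyclDist p q) ^ α) :
    ∀ p ∈ Γ₀, h11 p = 0 ∧ h12 p = 0 ∧ h22 p = 0 := by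
  intro p hp
  obtain ⟨ε, hε, hball⟩ := hΓint p hp
  obtain ⟨r, hr, h𝒪⟩ := exists_dist_lt_subset_of_eBall_inter_UH_subset hε hball
  obtain ⟨-, Cg1, hCg1⟩ := hc g1 (by simp)
  obtain ⟨-, Cg2, hCg2⟩ := hc g2 (by simp)
  obtain ⟨-, C11, hC11⟩ := hc h11 (by simp)
  obtain ⟨-, C12, hC12⟩ := hc h12 (by simp)
  obtain ⟨-, C22, hC22⟩ := hc h22 (by simp)
  have hdX := hv.differentiableAt_fderiv_apply h𝒪open (1, 0)
  have hdY := hv.differentiableAt_fderiv_apply h𝒪open (0, 1)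
  have hpS : p ∈ 𝒪 ∪ Γ₀ := Or.inr hp
  have hp₂ : p.2 = 0 := hΓ hp
  have hsub := subset_union_left (s := 𝒪) (t := Γ₀)
  have hg1' := fun q hq q' hq' => hCg1 q (hsub hq) q' (hsub hq')
  have hg2' := fun q hq q' hq' => hCg2 q (hsub hq) q' (hsub hq')
  refine ⟨?_, ?_, ?_⟩
  · exact eq_zero_of_eq_snd_mul_fderiv_of_cyclHolder (w := (1, 0)) hα hpS hp₂ hr hsub h𝒪
      hdX hg1 hh11 hg1' hC11 (by norm_num) (by norm_num)
  · exact eq_zero_of_eq_snd_mul_fderiv_of_cyclHolder (w := (0, 1)) hα hpS hp₂ hr hsub h𝒪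
      hdX hg1 hh12 hg1' hC12 (by norm_num) (by norm_num)
  · exact eq_zero_of_eq_snd_mul_fderiv_of_cyclHolder (w := (0, 1)) hα hpS hp₂ hr hsub h𝒪
      hdY hg2 hh22 hg2' hC22 (by norm_num) (by norm_num)

/-- if v ∈ C^{2+α}_s(𝒪 ∪ Γ₀), then the continuous extensions of
the components of y·D²v up to the degenerate boundary portion Γ₀ ⊂ {y = 0}
vanish on Γ₀. -/
theorem yD2v_vanishes_on_degenerate_boundary (𝒪 Γ₀ : Set (ℝ × ℝ)) (α : ℝ)
    (hα : 0 < α) (hα1 : α < 1)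
    (h𝒪open : IsOpen 𝒪) (h𝒪H : 𝒪 ⊆ UH) (hΓ : Γ₀ ⊆ {p : ℝ × ℝ | p.2 = 0})
    (hΓint : ∀ p ∈ Γ₀, ∃ ε : ℝ, 0 < ε ∧ eBall p ε ∩ UH ⊆ 𝒪)
    (v g1 g2 h11 h12 h22 : ℝ × ℝ → ℝ)
    (hv : ContDiffOn ℝ 2 v 𝒪)
    (hg1 : ∀ p ∈ 𝒪, g1 p = dX v p) (hg2 : ∀ p ∈ 𝒪, g2 p = dY v p)
    (hh11 : ∀ p ∈ 𝒪, h11 p = p.2 * dX (dX v) p)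
    (hh12 : ∀ p ∈ 𝒪, h12 p = p.2 * dY (dX v) p)
    (hh22 : ∀ p ∈ 𝒪, h22 p = p.2 * dY (dY v) p)
    (hc : ∀ f ∈ ({g1, g2, h11, h12, h22} : Set (ℝ × ℝ → ℝ)),
      ContinuousOn f (𝒪 ∪ Γ₀) ∧
        ∃ C : ℝ, ∀ p ∈ 𝒪 ∪ Γ₀, ∀ q ∈ 𝒪 ∪ Γ₀,
          |f p - f q| ≤ C * (cyclDist p q) ^ α) :
    ∀ p ∈ Γ₀, h11 p = 0 ∧ h12 p = 0 ∧ h22 p = 0 :=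
  yD2v_vanishes_on_degenerate_boundary_general 𝒪 Γ₀ α hα h𝒪open hΓ hΓint v g1 g2 h11 h12 h22 hv hg1
    hg2 hh11 hh12 hh22 hc
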